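/- A function h from finite multisets over a countable set X to the reals is invariant to permutations of its input list if and only if it can be written as h(x_1,...,x_M) = ρ(∑_{m=1}^M φ(x_m)) for suitable functions φ: X → ℝ-vector (e.g., φ: X → ℕ →₀ ℕ) and ρ. -/

import Mathlib

private theorem sum_single_eq_toFinsupp_ofFn (M : ℕ) (g : Fin M → ℕ) :
    (∑ m, Finsupp.single (g m) 1) = Multiset.toFinsupp (↑(List.ofFn g)) := by
  ext n
  rw [Finsupp.finset_sum_apply]
  have : (↑(List.ofFn g) : Multiset ℕ) = Multiset.map g Finset.univ.val := by
    simp [List.ofFn_eq_map, Finset.univ, Fintype.elems]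
  rw [Multiset.toFinsupp_apply, this, Multiset.count_map]
  simp only [Finsupp.single_apply]
  rw [← Finset.card_filter]
  simp only [Finset.card, Finset.filter_val]
  congr 1
  exact Multiset.filter_congr (fun a _ => by constructor <;> exact Eq.symm)

/-- Deep Sets decomposition theorem (Zaheer et al.): a function `h` on `M`-tuples
over a countable set `X` is invariant to permutations of its input if and only if
it decomposes as `h x = ρ (∑ m, φ (x m))` for suitable `φ : X → (ℕ →₀ ℕ)` and `ρ`. -/
theorem deep_sets_decomposition {X : Type*} [Countable X] (M : ℕ)
    (h : (Fin M → X) → ℝ) :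
    (∀ (x : Fin M → X) (π : Equiv.Perm (Fin M)), h (x ∘ π) = h x) ↔
      ∃ (φ : X → (ℕ →₀ ℕ)) (ρ : (ℕ →₀ ℕ) → ℝ),
        ∀ x : Fin M → X, h x = ρ (∑ m, φ (x m)) := by
  constructor
  · intro hinv
    obtain ⟨f, hf⟩ := Countable.exists_injective_nat X
    set φ : X → (ℕ →₀ ℕ) := fun a => Finsupp.single (f a) 1 with hφ
    have key : ∀ x y : Fin M → X, (∑ m, φ (x m)) = (∑ m, φ (y m)) → h x = h y := by
      intro x y hxy
      have hms : (↑(List.ofFn (f ∘ x)) : Multiset ℕ) = ↑(List.ofFn (f ∘ y)) := by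
        apply Multiset.toFinsupp.injective
        rw [← sum_single_eq_toFinsupp_ofFn, ← sum_single_eq_toFinsupp_ofFn]
        exact hxy
      set σ := Tuple.sort (f ∘ x)
      set τ := Tuple.sort (f ∘ y)
      have h1 : List.ofFn ((f ∘ x) ∘ σ) = List.ofFn ((f ∘ y) ∘ τ) := by
        refine (fun hp hs₁ hs₂ => List.Perm.eq_of_sortedLE hs₁ hs₂ hp) ?_ ?_ ?_
        · exact ((Equiv.Perm.ofFn_comp_perm σ (f ∘ x)).trans
            ((Multiset.coe_eq_coe.mp hms).trans
              (Equiv.Perm.ofFn_comp_perm τ (f ∘ y)).symm))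
        · exact (Tuple.monotone_sort (f ∘ x)).sortedLE_ofFn
        · exact (Tuple.monotone_sort (f ∘ y)).sortedLE_ofFn
      have h2 : (f ∘ x) ∘ σ = (f ∘ y) ∘ τ := List.ofFn_injective h1
      have h3 : x ∘ σ = y ∘ τ := funext fun i => hf (congrFun h2 i)
      calc h x = h (x ∘ σ) := (hinv x σ).symm
        _ = h (y ∘ τ) := by rw [h3]
        _ = h y := hinv y τ
    classical
    refine ⟨φ, fun s => if hs : ∃ x : Fin M → X, (∑ m, φ (x m)) = s then h hs.choose
      else 0, fun x => ?_⟩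
    have hx : ∃ x' : Fin M → X, (∑ m, φ (x' m)) = (∑ m, φ (x m)) := ⟨x, rfl⟩
    beta_reduce
    rw [dif_pos hx]
    exact (key _ _ hx.choose_spec).symm
  · rintro ⟨φ, ρ, hρ⟩ x π
    rw [hρ, hρ]
    congr 1
    exact Fintype.sum_equiv π _ _ (fun i => rfl)
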